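/- Let T(x,y) = (f(x), g(x,y)) be a C² skew product expanding map of 𝕋². For any (x₀,y₀) ∈ 𝕋², setting S₀ = {x₀}×𝕋 ∪ 𝕋×{y₀}, there exists a finite partition ℛ of 𝕋² into Markov proper sets R_i such that: (1) for each i, T(R_i) = 𝕋² and T restricted to the interior of R_i is one-to-one; (2) for any i, j, either π(int R_i) ∩ π(int R_j) = ∅ or π(int R_i) = π(int R_j), where π(x,y) = x; (3) the boundary of ℛ satisfies T(∂R_i) ⊂ S₀; (4) 𝒫 = π(ℛ) is a Markov partition for f. -/

import Mathlib

open MeasureTheory Filter Metric Set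
open scoped Topology ENNReal NNReal

noncomputable section

instance fact_zero_lt_one_real : Fact ((0:ℝ) < 1) := ⟨one_pos⟩

/-- The circle `𝕊 = ℝ/ℤ`. -/
abbrev 𝕊 : Type := AddCircle (1 : ℝ)

/-- The two-dimensional torus `𝕋² = (ℝ/ℤ)²`. -/
abbrev T2 : Type := 𝕊 × 𝕊

/-- Representative in `[0,1)` of a point of the circle. -/
def circleRep (a : 𝕊) : ℝ := ((AddCircle.equivIco 1 0) a : ℝ)

/-- Representative in `[0,1)²` of a point of the torus. -/
def torusRep2 (p : T2) : ℝ × ℝ := (circleRep p.1, circleRep p.2)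

/-! ### Kolmogorov–Sinai entropy, equilibrium states -/

/-- Shannon entropy of a finite family of sets. -/
def partitionEntropy {X : Type*} [MeasurableSpace X] (μ : Measure X) (P : Finset (Set X)) : ℝ :=
  ∑ A ∈ P, -((μ A).toReal * Real.log (μ A).toReal)

/-- Dynamical refinement `⋁_{k<n} T^{-k} P` of a finite family of sets. -/
def dynRefine {X : Type*} (T : X → X) (P : Finset (Set X)) (n : ℕ) : Finset (Set X) :=
  letI := Classical.decEq (Set X)
  (Finset.univ : Finset (Fin n → {A // A ∈ P})).image
    (fun c => ⋂ k : Fin n, (T^[(k : ℕ)]) ⁻¹' (c k : Set X))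

/-- A finite measurable partition (mod `μ`). -/
def IsMeasPartition {X : Type*} [MeasurableSpace X] (μ : Measure X) (P : Finset (Set X)) : Prop :=
  (∀ A ∈ P, MeasurableSet A) ∧ μ ((⋃ A ∈ P, A)ᶜ) = 0 ∧
    ∀ A ∈ P, ∀ B ∈ P, A ≠ B → μ (A ∩ B) = 0

/-- Kolmogorov–Sinai (measure-theoretic) entropy of `(T,μ)`. -/
def ksEntropy {X : Type*} [MeasurableSpace X] (T : X → X) (μ : Measure X) : ℝ :=
  ⨆ P : {P : Finset (Set X) // IsMeasPartition μ P},
    Filter.atTop.liminf (fun n : ℕ => partitionEntropy μ (dynRefine T P.1 n) / n)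

/-- `μ` is an equilibrium state for the potential `φ`. -/
def IsEquilibrium {X : Type*} [MeasurableSpace X] (T : X → X) (φ : X → ℝ) (μ : Measure X) :
    Prop :=
  IsProbabilityMeasure μ ∧ MeasurePreserving T μ μ ∧
    ∀ ν : Measure X, IsProbabilityMeasure ν → MeasurePreserving T ν ν →
      ksEntropy T ν + ∫ x, φ x ∂ν ≤ ksEntropy T μ + ∫ x, φ x ∂μ

/-- The pressure of `φ` (realized by the equilibrium state `μ`) is zero. -/
def PressureZero {X : Type*} [MeasurableSpace X] (T : X → X) (φ : X → ℝ) (μ : Measure X) :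
    Prop :=
  ksEntropy T μ + ∫ x, φ x ∂μ = 0

/-- Hölder continuity. -/
def HolderCont {X : Type*} [PseudoMetricSpace X] (φ : X → ℝ) : Prop :=
  ∃ C r : ℝ≥0, 0 < r ∧ HolderWith C r φ

/-- Hausdorff dimension of a measure: the infimum of the Hausdorff dimensions of sets of
positive measure. -/
def measureDimH {X : Type*} [EMetricSpace X] [MeasurableSpace X] (μ : Measure X) : ℝ≥0∞ :=
  ⨅ (s : Set X) (_ : 0 < μ s), dimH s

/-! ### Skew product expanding maps of `𝕋²` -/

/-- A `C²` skew-product expanding map `T(x,y) = (f(x), g(x,y))` of `𝕋²`, together with a `C²`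
lift `(F,G)` to `ℝ²` which is uniformly expanding (`sup ‖(dT)⁻¹‖ < 1`). -/
structure SkewSystem where
  f : 𝕊 → 𝕊
  g : T2 → 𝕊
  F : ℝ → ℝ
  G : ℝ × ℝ → ℝ
  smooth : ContDiff ℝ 2 (fun z : ℝ × ℝ => (F z.1, G z))
  liftf : ∀ t : ℝ, f (t : 𝕊) = ((F t : ℝ) : 𝕊)
  liftg : ∀ z : ℝ × ℝ, g ((z.1 : 𝕊), (z.2 : 𝕊)) = ((G z : ℝ) : 𝕊)
  expanding : ∃ c : ℝ, 0 ≤ c ∧ c < 1 ∧ ∀ z v : ℝ × ℝ,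
    ‖v‖ ≤ c * ‖(fderiv ℝ (fun w : ℝ × ℝ => (F w.1, G w)) z) v‖

/-- The skew product map `T(x,y) = (f(x), g(x,y))`. -/
def SkewSystem.T (S : SkewSystem) : T2 → T2 := fun p => (S.f p.1, S.g p)

/-- `f'` as a function on the circle. -/
def SkewSystem.fp (S : SkewSystem) (x : 𝕊) : ℝ := deriv S.F (circleRep x)

/-- `∂g/∂y` as a function on the torus. -/
def SkewSystem.gy (S : SkewSystem) (p : T2) : ℝ := fderiv ℝ S.G (torusRep2 p) (0, 1)

/-- `∂g/∂x` as a function on the torus. -/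
def SkewSystem.gx (S : SkewSystem) (p : T2) : ℝ := fderiv ℝ S.G (torusRep2 p) (1, 0)

/-- `F_n = ∏_{j<n} f' ∘ f^j`, as a function on the circle. -/
def SkewSystem.FnC (S : SkewSystem) (n : ℕ) (x : 𝕊) : ℝ :=
  ∏ j ∈ Finset.range n, S.fp (S.f^[j] x)

/-- `F_n = ∏_{j<n} f' ∘ f^j ∘ π` on the torus. -/
def SkewSystem.Fn (S : SkewSystem) (n : ℕ) (p : T2) : ℝ := S.FnC n p.1

/-- `G_n = ∏_{j<n} (∂g/∂y) ∘ T^j`. -/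
def SkewSystem.Gn (S : SkewSystem) (n : ℕ) (p : T2) : ℝ :=
  ∏ j ∈ Finset.range n, S.gy (S.T^[j] p)

/-- The Lyapunov exponent `λ^u = ∫ log |f'| dμ`. -/
def SkewSystem.lamU (S : SkewSystem) (μ : Measure T2) : ℝ := ∫ p, Real.log |S.fp p.1| ∂μ

/-- The Lyapunov exponent `λ^{uu} = ∫ log |∂g/∂y| dμ`. -/
def SkewSystem.lamUU (S : SkewSystem) (μ : Measure T2) : ℝ := ∫ p, Real.log |S.gy p| ∂μ

/-- Birkhoff sum `S_n h = ∑_{k<n} h ∘ T^k`. -/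
def birk {X : Type*} (T : X → X) (h : X → ℝ) (n : ℕ) (p : X) : ℝ :=
  ∑ k ∈ Finset.range n, h (T^[k] p)

/-- `n_ε(x,y)` is the largest integer `k` with `G_k(x,y) ε ≤ 1`. -/
def IsNeps (S : SkewSystem) (neps : ℝ → T2 → ℕ) : Prop :=
  ∀ ε : ℝ, 0 < ε → ∀ p : T2,
    S.Gn (neps ε p) p * ε ≤ 1 ∧ ∀ k : ℕ, S.Gn k p * ε ≤ 1 → k ≤ neps ε p

/-- `m_ε(x)` is the largest integer `k` with `F_k(x) ε ≤ 1`. -/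
def IsMeps (S : SkewSystem) (meps : ℝ → 𝕊 → ℕ) : Prop :=
  ∀ ε : ℝ, 0 < ε → ∀ x : 𝕊,
    S.FnC (meps ε x) x * ε ≤ 1 ∧ ∀ k : ℕ, S.FnC k x * ε ≤ 1 → k ≤ meps ε x

/-! ### Markov partitions and cylinders -/

/-- `S₀ = {x₀}×𝕋 ∪ 𝕋×{y₀}`. -/
def S0 (x0 y0 : 𝕊) : Set T2 :=
  ({x0} ×ˢ (Set.univ : Set 𝕊)) ∪ ((Set.univ : Set 𝕊) ×ˢ {y0})

/-- A finite partition into proper sets: each element is the closure of its interior, the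
elements cover, and their interiors are pairwise disjoint. -/
def IsProperPartition {X : Type*} [TopologicalSpace X] (R : Finset (Set X)) : Prop :=
  (∀ A ∈ R, closure (interior A) = A) ∧ (⋃ A ∈ R, A) = Set.univ ∧
    ∀ A ∈ R, ∀ B ∈ R, A ≠ B → interior A ∩ interior B = ∅

/-- A Markov partition for `f`: a proper partition such that each element maps onto a union
of elements (if `f(int A)` meets `int B` then `B ⊆ f(A)`). -/
def IsMarkovPartition {X : Type*} [TopologicalSpace X] (f : X → X) (P : Finset (Set X)) :
    Prop :=
  IsProperPartition P ∧
    ∀ A ∈ P, ∀ B ∈ P, (f '' interior A ∩ interior B).Nonempty → B ⊆ f '' A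

/-- Projection `π(ℛ)` of a family of subsets of `𝕋²` to the circle. -/
def projOf (R : Finset (Set T2)) : Finset (Set 𝕊) :=
  letI := Classical.decEq (Set 𝕊)
  R.image (fun A => Prod.fst '' A)

/-- The Markov partition `ℛ` of `𝕋²` constructed from `S₀ = {x₀}×𝕋 ∪ 𝕋×{y₀}`
(Lemma on fibered Markov partitions), bundled with its properties. -/
structure MarkovData (S : SkewSystem) where
  x0 : 𝕊
  y0 : 𝕊
  part : Finset (Set T2)
  proper : IsProperPartition part
  onto : ∀ R ∈ part, S.T '' R = Set.univ
  inj : ∀ R ∈ part, Set.InjOn S.T (interior R)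
  projAgree : ∀ R ∈ part, ∀ R' ∈ part,
    (Prod.fst '' interior R) ∩ (Prod.fst '' interior R') = ∅ ∨
      Prod.fst '' interior R = Prod.fst '' interior R'
  border : ∀ R ∈ part, S.T '' frontier R ⊆ S0 x0 y0
  projMarkov : IsMarkovPartition S.f (projOf part)

/-- The element of the partition `P` containing `p` (an arbitrary one for boundary points). -/
def cellOf {X : Type*} (P : Finset (Set X)) (p : X) : Set X :=
  letI := Classical.propDecidable
  if h : ∃ A ∈ P, p ∈ A then h.choose else ∅

/-- The `n`-cylinder of `p`: the element of `⋁_{k<n} T^{-k} P` containing `p`. -/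
def cylDyn {X : Type*} (T : X → X) (P : Finset (Set X)) (n : ℕ) (p : X) : Set X :=
  ⋂ k ∈ Finset.range n, (T^[k]) ⁻¹' (cellOf P (T^[k] p))

/-- The cylinder `ℛ_n(x,y)` for `T`. -/
def cylT (S : SkewSystem) (M : MarkovData S) (n : ℕ) (p : T2) : Set T2 :=
  cylDyn S.T M.part n p

/-- The cylinder `𝒫_m(x)` for `f`. -/
def cylF (S : SkewSystem) (M : MarkovData S) (m : ℕ) (x : 𝕊) : Set 𝕊 :=
  cylDyn S.f (projOf M.part) m x

/-- The multi-temporal Markov approximation of the ball: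
`C_ε(x,y) = ℛ_{n_ε(x,y)}(x,y) ∩ π⁻¹(𝒫_{m_ε(x)}(x))`. -/
def Ceps (S : SkewSystem) (M : MarkovData S) (neps : ℝ → T2 → ℕ) (meps : ℝ → 𝕊 → ℕ)
    (ε : ℝ) (p : T2) : Set T2 :=
  cylT S M (neps ε p) p ∩ (Prod.fst ⁻¹' cylF S M (meps ε p.1) p.1)


/-!
Lift `T` to `(t, s) ↦ (F t, G (t, s))` on `ℝ²`. Expansion forces `|F'| > 1` and `|∂G/∂s| > 1`.
The differences `F (t + 1) - F t` and `G (t, s + 1) - G (t, s)` are continuous and integer valued,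
hence constant integers `d`, `e`, and the mean value theorem gives `|d|, |e| ≥ 2`. Cut the base
line at the `|d|` points per unit length where `F` takes a value over `x₀`, and the fibre over `t`
at the `|e|` points where `G (t, ·)` takes a value over `y₀`; the latter move continuously with
`t`. Each curvilinear rectangle so obtained has sides shorter than `1`, so it embeds in `𝕋²`, and
the lift maps it monotonically onto a unit square whose sides lie over `S₀`. This gives (1) and
(3); the projections of the rectangles are the arcs between consecutive base cuts, which gives
(2) and (4).
-/

open Function

theorem interior_image_eq_of_injOn {X Y : Type*} [TopologicalSpace X] [TopologicalSpace Y]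
    {g : X → Y} {s U : Set X} (hg : Continuous g) (hgo : IsOpenMap g) (hU : IsOpen U)
    (hinj : InjOn g U) (hsU : s ⊆ U) : interior (g '' s) = g '' interior s := by
  refine Subset.antisymm (fun y hy => ?_) (hgo.image_interior_subset s)
  obtain ⟨x, hx, rfl⟩ := interior_subset hy
  have hsub : U ∩ g ⁻¹' interior (g '' s) ⊆ s := by
    rintro z ⟨hzU, hz⟩
    obtain ⟨x', hx', hgx'⟩ := interior_subset hz
    rwa [← hinj (hsU hx') hzU hgx']
  exact ⟨x, interior_maximal hsub (hU.inter (isOpen_interior.preimage hg)) ⟨hsU hx, hy⟩, rfl⟩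

section BetweenGraphs

variable {a b : ℝ} {v₁ v₂ : ℝ → ℝ}

theorem interior_setOf_mem_Icc_mem_Icc (h₁ : Continuous v₁) (h₂ : Continuous v₂) :
    interior {z : ℝ × ℝ | z.1 ∈ Icc a b ∧ z.2 ∈ Icc (v₁ z.1) (v₂ z.1)} =
      {z | z.1 ∈ Ioo a b ∧ z.2 ∈ Ioo (v₁ z.1) (v₂ z.1)} := by
  refine Subset.antisymm (fun z hz => ⟨?_, ?_⟩) (interior_maximal ?_ ?_)
  · rw [← interior_Icc]
    refine interior_mono ?_ (isOpenMap_fst.image_interior_subset _ ⟨z, hz, rfl⟩)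
    rintro _ ⟨w, hw, rfl⟩
    exact hw.1
  · rw [← interior_Icc]
    refine interior_mono (fun s hs => hs.2) (preimage_interior_subset_interior_preimage
      (continuous_const.prodMk continuous_id) (show (z.1, z.2) ∈ _ from hz))
  · exact fun z hz => ⟨Ioo_subset_Icc_self hz.1, Ioo_subset_Icc_self hz.2⟩
  · exact (isOpen_Ioo.preimage continuous_fst).inter
      ((isOpen_lt (h₁.comp continuous_fst) continuous_snd).inter
        (isOpen_lt continuous_snd (h₂.comp continuous_fst)))

def fillBetween (v₁ v₂ : ℝ → ℝ) (p : ℝ × ℝ) : ℝ × ℝ :=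
  (p.1, v₁ p.1 + p.2 * (v₂ p.1 - v₁ p.1))

theorem continuous_fillBetween (h₁ : Continuous v₁) (h₂ : Continuous v₂) :
    Continuous (fillBetween v₁ v₂) := by
  unfold fillBetween
  fun_prop

theorem fillBetween_image_Icc (h : ∀ t, v₁ t < v₂ t) :
    fillBetween v₁ v₂ '' (Icc a b ×ˢ Icc 0 1) =
      {z : ℝ × ℝ | z.1 ∈ Icc a b ∧ z.2 ∈ Icc (v₁ z.1) (v₂ z.1)} := by
  ext ⟨t, s⟩
  have hpos := sub_pos.2 (h t)
  constructor
  · rintro ⟨⟨t', θ⟩, ⟨ht, hθ₀, hθ₁⟩, he⟩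
    simp only [fillBetween, Prod.mk.injEq] at he
    obtain ⟨rfl, rfl⟩ := he
    exact ⟨ht, by nlinarith, by nlinarith⟩
  · rintro ⟨ht, hs₁, hs₂⟩
    refine ⟨(t, (s - v₁ t) / (v₂ t - v₁ t)), ⟨ht, by positivity, ?_⟩, ?_⟩
    · exact (div_le_one hpos).2 (by linarith)
    · simp only [fillBetween]
      rw [div_mul_cancel₀ _ hpos.ne']
      ring_nf

theorem mapsTo_fillBetween_Ioo (h : ∀ t, v₁ t < v₂ t) :
    MapsTo (fillBetween v₁ v₂) (Ioo a b ×ˢ Ioo 0 1)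
      {z : ℝ × ℝ | z.1 ∈ Ioo a b ∧ z.2 ∈ Ioo (v₁ z.1) (v₂ z.1)} := by
  rintro ⟨t, θ⟩ ⟨ht, hθ₀, hθ₁⟩
  exact ⟨ht, by simp only [fillBetween]; nlinarith [sub_pos.2 (h t)],
    by simp only [fillBetween]; nlinarith [sub_pos.2 (h t)]⟩

theorem isCompact_setOf_mem_Icc_mem_Icc (h₁ : Continuous v₁) (h₂ : Continuous v₂)
    (h : ∀ t, v₁ t < v₂ t) :
    IsCompact {z : ℝ × ℝ | z.1 ∈ Icc a b ∧ z.2 ∈ Icc (v₁ z.1) (v₂ z.1)} := by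
  rw [← fillBetween_image_Icc h]
  exact (isCompact_Icc.prod isCompact_Icc).image (continuous_fillBetween h₁ h₂)

theorem setOf_mem_Icc_mem_Icc_subset_closure (hab : a < b) (h₁ : Continuous v₁)
    (h₂ : Continuous v₂) (h : ∀ t, v₁ t < v₂ t) :
    {z : ℝ × ℝ | z.1 ∈ Icc a b ∧ z.2 ∈ Icc (v₁ z.1) (v₂ z.1)} ⊆
      closure {z | z.1 ∈ Ioo a b ∧ z.2 ∈ Ioo (v₁ z.1) (v₂ z.1)} := by
  rw [← fillBetween_image_Icc h, ← closure_Ioo hab.ne, ← closure_Ioo zero_ne_one,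
    ← closure_prod_eq]
  exact (image_closure_subset_closure_image (continuous_fillBetween h₁ h₂)).trans
    (closure_mono (mapsTo_fillBetween_Ioo h).image_subset)

end BetweenGraphs

section Circle

theorem injOn_coe_Ioc (a : ℝ) : InjOn ((↑) : ℝ → 𝕊) (Ioc a (a + 1)) := fun _ hx _ hy h =>
  (AddCircle.coe_eq_coe_iff_of_mem_Ioc hx hy).1 h

theorem coe_add_intCast (x : ℝ) (n : ℤ) : ((x + n : ℝ) : 𝕊) = x := by
  rw [AddCircle.coe_add, add_eq_left, AddCircle.coe_eq_zero_iff]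
  exact ⟨n, by simp⟩

theorem exists_intCast_eq_sub_of_coe_eq {x y : ℝ} (h : (x : 𝕊) = y) : ∃ n : ℤ, y - x = n := by
  obtain ⟨n, hn⟩ := (AddCircle.coe_eq_zero_iff (p := (1 : ℝ)) (x := y - x)).1
    (by rw [AddCircle.coe_sub, h, sub_self])
  exact ⟨n, by rw [← hn, zsmul_one]⟩

theorem exists_coe_eq_mem_Ioc {w : ℤ → ℝ} (hw : Monotone w) {N : ℤ} (hN : w N = w 0 + 1)
    (x : 𝕊) : ∃ k ∈ Ico 0 N, ∃ t ∈ Ioc (w k) (w (k + 1)), (t : 𝕊) = x := by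
  obtain ⟨t, ht, rfl⟩ : x ∈ ((↑) : ℝ → 𝕊) '' Ioc (w 0) (w 0 + 1) := by
    rw [AddCircle.coe_image_Ioc_eq]; trivial
  rw [← hN, ← hw.biUnion_Ico_Ioc_map_succ] at ht
  simp only [mem_iUnion, Order.succ_eq_add_one] at ht
  obtain ⟨k, hk, ht⟩ := ht
  exact ⟨k, hk, t, ht, rfl⟩

variable {φ : ℝ → ℝ} {a b : ℝ}

theorem surjOn_coe_comp_Icc (hφ : Continuous φ) (hab : a ≤ b) (h : |φ b - φ a| = 1) :
    SurjOn (fun t => (φ t : 𝕊)) (Icc a b) univ := by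
  intro x _
  have hmax : max (φ a) (φ b) = min (φ a) (φ b) + 1 := by
    rw [← h, ← max_sub_min_eq_abs]; ring
  obtain ⟨w, hw, rfl⟩ : x ∈ ((↑) : ℝ → 𝕊) '' Icc (min (φ a) (φ b)) (min (φ a) (φ b) + 1) := by
    rw [AddCircle.coe_image_Icc_eq]; trivial
  rw [← hmax, ← uIcc] at hw
  obtain ⟨t, ht, rfl⟩ := intermediate_value_uIcc hφ.continuousOn hw
  exact ⟨t, uIcc_of_le hab ▸ ht, rfl⟩

theorem injOn_coe_comp_Ioo (hφ : StrictMono φ ∨ StrictAnti φ) (h : |φ b - φ a| = 1) :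
    InjOn (fun t => (φ t : 𝕊)) (Ioo a b) := by
  have hmax : max (φ a) (φ b) = min (φ a) (φ b) + 1 := by
    rw [← h, ← max_sub_min_eq_abs]; ring
  have hmaps : MapsTo φ (Ioo a b) (Ioc (min (φ a) (φ b)) (min (φ a) (φ b) + 1)) := by
    rw [← hmax]
    rcases hφ with hφ | hφ <;> intro t ht
    · exact ⟨(min_le_left _ _).trans_lt (hφ ht.1), (hφ ht.2).le.trans (le_max_right _ _)⟩
    · exact ⟨(min_le_right _ _).trans_lt (hφ ht.2), (hφ ht.1).le.trans (le_max_left _ _)⟩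
  have hinj : Injective φ := hφ.elim StrictMono.injective StrictAnti.injective
  exact (injOn_coe_Ioc _).comp hinj.injOn hmaps

end Circle

theorem Monotone.disjoint_Ioo_succ {w : ℤ → ℝ} (hw : Monotone w) {k k' : ℤ} (h : k ≠ k') :
    Disjoint (Ioo (w k) (w (k + 1))) (Ioo (w k') (w (k' + 1))) := by
  simpa only [Order.succ_eq_add_one] using hw.pairwise_disjoint_on_Ioo_succ h

theorem Monotone.Ioo_subset_Ioc_of_mem_Ico {w : ℤ → ℝ} (hw : Monotone w) {N k : ℤ}
    (hN : w N = w 0 + 1) (hk : k ∈ Ico 0 N) : Ioo (w k) (w (k + 1)) ⊆ Ioc (w 0) (w 0 + 1) := by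
  rw [← hN]
  exact Ioo_subset_Ioc_self.trans (Ioc_subset_Ioc (hw hk.1) (hw (by linarith [hk.2])))

section Lifts

theorem exists_intCast_forall_eq {X : Type*} [TopologicalSpace X] [PreconnectedSpace X]
    [Nonempty X] {h : X → ℝ} (hc : Continuous h) (hint : ∀ x, ∃ n : ℤ, h x = n) :
    ∃ n : ℤ, ∀ x, h x = n := by
  obtain ⟨n, hn⟩ := hint (Classical.arbitrary X)
  refine ⟨n, fun x => hn ▸ isPreconnected_univ.constant_of_mapsTo
    Real.isClosedEmbedding_intCast.isInducing.isDiscrete_range hc.continuousOn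
    (fun x _ => ?_) (mem_univ x) (mem_univ _)⟩
  obtain ⟨m, hm⟩ := hint x
  exact ⟨m, hm.symm⟩

variable {φ : ℝ → ℝ}

theorem strictMono_or_strictAnti_of_deriv_ne_zero (hφ : Differentiable ℝ φ)
    (h : ∀ t, deriv φ t ≠ 0) : StrictMono φ ∨ StrictAnti φ := by
  rcases hasDerivWithinAt_forall_lt_or_forall_gt_of_forall_ne convex_univ
    (fun t _ => (hφ t).hasDerivAt.hasDerivWithinAt) (fun t _ => h t) with h' | h'
  · exact Or.inr (strictAnti_of_deriv_neg fun t => h' t trivial)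
  · exact Or.inl (strictMono_of_deriv_pos fun t => h' t trivial)

theorem two_le_abs_of_one_lt_abs_deriv (hφ : Differentiable ℝ φ) (h : ∀ t, 1 < |deriv φ t|)
    {d : ℤ} (hd : ∀ t, φ (t + 1) = φ t + d) : 2 ≤ |d| := by
  obtain ⟨c, -, hc⟩ := exists_deriv_eq_slope φ zero_lt_one hφ.continuous.continuousOn
    fun t _ => (hφ t).differentiableWithinAt
  rw [show (1 : ℝ) = 0 + 1 by norm_num, hd, add_sub_cancel_left, add_sub_cancel_left,
    div_one] at hc
  have : (1 : ℝ) < |(d : ℝ)| := hc ▸ h c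
  have : 1 < |d| := by exact_mod_cast this
  omega

theorem strictMono_sign_mul (hφ : StrictMono φ ∨ StrictAnti φ) {d : ℤ}
    (hd : ∀ t, φ (t + 1) = φ t + d) : StrictMono fun t => (d.sign : ℝ) * φ t := by
  rcases hφ with hφ | hφ
  · have : (0 : ℝ) < d := by linarith [hd 0, hφ (lt_add_one (0 : ℝ))]
    simpa [Int.sign_eq_one_of_pos (by exact_mod_cast this : 0 < d)] using hφ
  · have : (d : ℝ) < 0 := by linarith [hd 0, hφ (lt_add_one (0 : ℝ))]
    simpa [Int.sign_eq_neg_one_of_neg (by exact_mod_cast this : d < 0)] using hφ.neg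

theorem apply_add_intCast_mul {D : ℝ} (hD : ∀ t, φ (t + 1) = φ t + D) (t : ℝ) (n : ℤ) :
    φ (t + n) = φ t + n * D := by
  induction n using Int.induction_on with
  | zero => simp
  | succ n ih => rw [Int.cast_add, Int.cast_one, ← add_assoc, hD, ih]; ring
  | pred n ih =>
    have := hD (t + ((-n - 1 : ℤ) : ℝ))
    rw [show t + ((-n - 1 : ℤ) : ℝ) + 1 = t + ((-n : ℤ) : ℝ) by push_cast; ring, ih] at this
    push_cast at this ⊢
    linarith

theorem surjective_of_add_one (hc : Continuous φ) {D : ℝ} (hD₁ : 1 ≤ D)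
    (hD : ∀ t, φ (t + 1) = φ t + D) : Surjective φ := by
  intro w
  set n : ℤ := ⌈|w - φ 0|⌉
  have hn : |w - φ 0| ≤ n := Int.le_ceil _
  have h₁ := apply_add_intCast_mul hD 0 n
  have h₂ := apply_add_intCast_mul hD 0 (-n)
  push_cast at h₁ h₂
  rw [zero_add] at h₁ h₂
  have hn₀ : (0 : ℝ) ≤ n := (abs_nonneg _).trans hn
  have := mul_nonneg hn₀ (sub_nonneg.2 hD₁)
  obtain ⟨t, -, ht⟩ := intermediate_value_Icc (neg_le_self hn₀) hc.continuousOn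
    (show w ∈ Icc (φ (-n)) (φ n) by
      constructor <;> linarith [le_abs_self (w - φ 0), neg_abs_le (w - φ 0)])
  exact ⟨t, ht⟩

theorem continuous_of_strictMono_of_apply_eq {X : Type*} [TopologicalSpace X]
    {h : X → ℝ → ℝ} (hc : Continuous (uncurry h)) (hmono : ∀ x, StrictMono (h x))
    {w : X → ℝ} {y : ℝ} (hw : ∀ x, h x (w x) = y) : Continuous w := by
  have hc' (s : ℝ) : Continuous fun x => h x s := hc.comp (continuous_id.prodMk continuous_const)
  refine continuous_iff_continuousAt.2 fun x₀ => tendsto_order.2 ⟨fun a ha => ?_, fun b hb => ?_⟩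
  · filter_upwards [(hc' a).continuousAt.eventually_lt continuousAt_const
      (hw x₀ ▸ hmono x₀ ha)] with x hx
    exact (hmono x).lt_iff_lt.1 (hw x ▸ hx)
  · filter_upwards [continuousAt_const.eventually_lt (hc' b).continuousAt
      (hw x₀ ▸ hmono x₀ hb)] with x hx
    exact (hmono x).lt_iff_lt.1 (hw x ▸ hx)

theorem exists_continuous_levels {X : Type*} [TopologicalSpace X] {h : X → ℝ → ℝ}
    (hc : Continuous (uncurry h)) (hmono : ∀ x, StrictMono (h x) ∨ StrictAnti (h x)) {d : ℤ}
    (hd : 2 ≤ |d|) (hper : ∀ x s, h x (s + 1) = h x s + d) (y : ℝ) :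
    ∃ v : X → ℤ → ℝ, (∀ j, Continuous fun x => v x j) ∧ (∀ x, StrictMono (v x)) ∧
      (∀ x j, v x (j + |d|) = v x j + 1) ∧ (∀ x j, |h x (v x (j + 1)) - h x (v x j)| = 1) ∧
      ∀ x j, (h x (v x j) : 𝕊) = y := by
  set σ : ℝ := (d.sign : ℝ)
  have hσ : |σ| = 1 := by
    simp only [σ]
    exact_mod_cast Int.abs_sign_of_ne_zero (abs_pos.1 (by omega))
  have hσσ : σ * σ = 1 := by rw [← abs_mul_abs_self, hσ, one_mul]
  set h' : X → ℝ → ℝ := fun x s => σ * h x s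
  have hmono' (x : X) : StrictMono (h' x) := strictMono_sign_mul (hmono x) (hper x)
  have hper' (x : X) (s : ℝ) : h' x (s + 1) = h' x s + (|d| : ℤ) := by
    simp only [h', hper, σ, ← Int.sign_mul_self_eq_abs]
    push_cast
    ring
  have hsurj (x : X) : Surjective (h' x) :=
    surjective_of_add_one ((continuous_const.mul hc).comp (continuous_const.prodMk continuous_id))
      (by exact_mod_cast (by omega : (1 : ℤ) ≤ |d|)) (hper' x)
  set v : X → ℤ → ℝ := fun x j => invFun (h' x) (σ * y + j)
  have hv (x : X) (j : ℤ) : h' x (v x j) = σ * y + j := invFun_eq (hsurj x _)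
  have hhv (x : X) (j : ℤ) : h x (v x j) = y + (d.sign * j : ℤ) := by
    have := congrArg (σ * ·) (hv x j)
    simp only [h', ← mul_assoc, hσσ, one_mul] at this
    rw [this, mul_add, ← mul_assoc, hσσ, one_mul]
    push_cast
    rfl
  refine ⟨v, fun j => continuous_of_strictMono_of_apply_eq (continuous_const.mul hc) hmono'
    (hv · j), fun x => strictMono_int_of_lt_succ fun j => ?_, fun x j => ?_, fun x j => ?_,
    fun x j => by rw [hhv, coe_add_intCast]⟩
  · exact (hmono' x).lt_iff_lt.1 (by rw [hv, hv]; push_cast; linarith)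
  · exact (hmono' x).injective (by rw [hper', hv, hv]; push_cast; ring)
  · rw [hhv, hhv]
    push_cast
    rw [show y + σ * (j + 1) - (y + σ * j) = σ by ring, hσ]

end Lifts

def torusMk (z : ℝ × ℝ) : T2 := ((z.1 : 𝕊), (z.2 : 𝕊))

theorem continuous_torusMk : Continuous torusMk :=
  (AddCircle.continuous_mk' 1).prodMap (AddCircle.continuous_mk' 1)

theorem isOpenMap_torusMk : IsOpenMap torusMk :=
  QuotientAddGroup.isOpenMap_coe.prodMap QuotientAddGroup.isOpenMap_coe

theorem injOn_torusMk (a : ℝ) (w : ℝ → ℝ) :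
    InjOn torusMk {z | z.1 ∈ Ioc a (a + 1) ∧ z.2 ∈ Ioc (w z.1) (w z.1 + 1)} := by
  rintro ⟨t, s⟩ ⟨ht, hs⟩ ⟨t', s'⟩ ⟨ht', hs'⟩ h
  simp only [torusMk, Prod.mk.injEq] at h
  obtain rfl : t = t' := injOn_coe_Ioc a ht ht' h.1
  exact Prod.ext rfl (injOn_coe_Ioc _ hs hs' h.2)

namespace SkewSystem

variable (S : SkewSystem)

theorem T_torusMk (z : ℝ × ℝ) :
    S.T (torusMk z) = torusMk (S.F z.1, S.G z) :=
  Prod.ext (S.liftf z.1) (S.liftg z)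

theorem contDiff_F : ContDiff ℝ 2 S.F :=
  contDiff_fst.comp (S.smooth.comp (contDiff_id.prodMk (contDiff_const (c := (0 : ℝ)))))

theorem contDiff_G : ContDiff ℝ 2 S.G := contDiff_snd.comp S.smooth

theorem differentiable_F : Differentiable ℝ S.F := S.contDiff_F.differentiable two_ne_zero

theorem differentiable_G : Differentiable ℝ S.G := S.contDiff_G.differentiable two_ne_zero

theorem hasDerivAt_G_right (x s : ℝ) :
    HasDerivAt (fun s => S.G (x, s)) (fderiv ℝ S.G (x, s) (0, 1)) s :=
  (S.differentiable_G (x, s)).hasFDerivAt.comp_hasDerivAt s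
    ((hasDerivAt_const s x).prodMk (hasDerivAt_id s))

theorem differentiable_G_right (x : ℝ) : Differentiable ℝ fun s => S.G (x, s) :=
  fun s => (S.hasDerivAt_G_right x s).differentiableAt

theorem fderiv_lift_apply (z w : ℝ × ℝ) :
    fderiv ℝ (fun w : ℝ × ℝ => (S.F w.1, S.G w)) z w = (deriv S.F z.1 * w.1, fderiv ℝ S.G z w) := by
  have : HasFDerivAt (fun w : ℝ × ℝ => (S.F w.1, S.G w))
      ((deriv S.F z.1 • ContinuousLinearMap.fst ℝ ℝ ℝ).prod (fderiv ℝ S.G z)) z :=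
    ((S.differentiable_F z.1).hasDerivAt.comp_hasFDerivAt z hasFDerivAt_fst).prodMk
      (S.differentiable_G z).hasFDerivAt
  simp [this.fderiv]

theorem one_lt_abs_deriv_G (x s : ℝ) : 1 < |deriv (fun s => S.G (x, s)) s| := by
  obtain ⟨c, hc₀, hc₁, hexp⟩ := S.expanding
  have h := hexp (x, s) (0, 1)
  simp only [fderiv_lift_apply, Prod.norm_mk, norm_zero, norm_one, mul_zero,
    Real.norm_eq_abs] at h
  rw [max_eq_right zero_le_one, max_eq_right (abs_nonneg _)] at h
  rw [(S.hasDerivAt_G_right x s).deriv]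
  by_contra! h'
  nlinarith

theorem one_lt_abs_deriv_F (t : ℝ) : 1 < |deriv S.F t| := by
  obtain ⟨c, hc₀, hc₁, hexp⟩ := S.expanding
  have hGy : fderiv ℝ S.G (t, 0) (0, 1) ≠ 0 := by
    rw [← (S.hasDerivAt_G_right t 0).deriv]
    exact abs_pos.1 (one_pos.trans (S.one_lt_abs_deriv_G t 0))
  -- `(1, b)` is tangent to the level curve of `G`, so the derivative of the lift maps it to
  -- `(F' t, 0)`, while `‖(1, b)‖ ≥ 1`
  set b := -fderiv ℝ S.G (t, 0) (1, 0) / fderiv ℝ S.G (t, 0) (0, 1)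
  have hb : fderiv ℝ S.G (t, 0) (1, b) = 0 := by
    rw [show ((1 : ℝ), b) = (1, 0) + b • (0, 1) by simp, map_add, map_smul, smul_eq_mul,
      div_mul_cancel₀ _ hGy]
    ring
  have h := hexp (t, 0) (1, b)
  rw [fderiv_lift_apply, hb] at h
  simp only [Prod.norm_mk, norm_zero, norm_one, mul_one, Real.norm_eq_abs] at h
  rw [max_eq_left (abs_nonneg (deriv S.F t))] at h
  by_contra! h'
  nlinarith [le_max_left 1 |b|]

theorem exists_F_add_one : ∃ d : ℤ, ∀ t, S.F (t + 1) = S.F t + d := by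
  obtain ⟨d, hd⟩ := exists_intCast_forall_eq (h := fun t => S.F (t + 1) - S.F t)
    ((S.differentiable_F.continuous.comp (continuous_add_const 1)).sub
      S.differentiable_F.continuous) fun t =>
      exists_intCast_eq_sub_of_coe_eq (by rw [← S.liftf, ← S.liftf, AddCircle.coe_add_period])
  exact ⟨d, fun t => by linarith [hd t]⟩

theorem exists_G_add_one : ∃ e : ℤ, ∀ x s, S.G (x, s + 1) = S.G (x, s) + e := by
  obtain ⟨e, he⟩ := exists_intCast_forall_eq (h := fun z : ℝ × ℝ => S.G (z.1, z.2 + 1) - S.G z)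
    ((S.differentiable_G.continuous.comp (continuous_fst.prodMk
      (continuous_snd.add continuous_const))).sub S.differentiable_G.continuous) fun z =>
      exists_intCast_eq_sub_of_coe_eq (by
        rw [← S.liftg, ← S.liftg, AddCircle.coe_add_period])
  exact ⟨e, fun x s => by linarith [he (x, s)]⟩

end SkewSystem

/-- Breakpoints `u k` on the base (`D` per unit length) and, over each base point `x`,
breakpoints `v x j` on the fibre (`E` per unit length, varying continuously with `x`). The cell
`(k, j)` is the image in `𝕋²` of `{(t, s) | u k ≤ t ≤ u (k + 1), v t j ≤ s ≤ v t (j + 1)}`. -/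
structure MarkovGrid where
  D : ℤ
  E : ℤ
  u : ℤ → ℝ
  v : ℝ → ℤ → ℝ
  two_le_D : 2 ≤ D
  two_le_E : 2 ≤ E
  strictMono_u : StrictMono u
  u_add_D : ∀ k, u (k + D) = u k + 1
  continuous_v : ∀ j, Continuous fun x => v x j
  strictMono_v : ∀ x, StrictMono (v x)
  v_add_E : ∀ x j, v x (j + E) = v x j + 1

namespace MarkovGrid

variable (Γ : MarkovGrid)

def region (k j : ℤ) : Set (ℝ × ℝ) :=
  {z | z.1 ∈ Icc (Γ.u k) (Γ.u (k + 1)) ∧ z.2 ∈ Icc (Γ.v z.1 j) (Γ.v z.1 (j + 1))}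

def openRegion (k j : ℤ) : Set (ℝ × ℝ) :=
  {z | z.1 ∈ Ioo (Γ.u k) (Γ.u (k + 1)) ∧ z.2 ∈ Ioo (Γ.v z.1 j) (Γ.v z.1 (j + 1))}

def cell (k j : ℤ) : Set T2 := torusMk '' Γ.region k j

def arc (k : ℤ) : Set 𝕊 := (↑) '' Icc (Γ.u k) (Γ.u (k + 1))

open scoped Classical in
def cells : Finset (Set T2) :=
  (Finset.Ico 0 Γ.D ×ˢ Finset.Ico 0 Γ.E).image fun kj => Γ.cell kj.1 kj.2

open scoped Classical in
def arcs : Finset (Set 𝕊) := (Finset.Ico 0 Γ.D).image Γ.arc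

variable {Γ}

theorem u_lt_u_succ (k : ℤ) : Γ.u k < Γ.u (k + 1) := Γ.strictMono_u (lt_add_one k)

theorem v_lt_v_succ (x : ℝ) (j : ℤ) : Γ.v x j < Γ.v x (j + 1) := Γ.strictMono_v x (lt_add_one j)

theorem u_succ_lt_add_one (k : ℤ) : Γ.u (k + 1) < Γ.u k + 1 := by
  rw [← Γ.u_add_D]
  exact Γ.strictMono_u (by linarith [Γ.two_le_D])

theorem v_succ_lt_add_one (x : ℝ) (j : ℤ) : Γ.v x (j + 1) < Γ.v x j + 1 := by
  rw [← Γ.v_add_E]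
  exact Γ.strictMono_v x (by linarith [Γ.two_le_E])

theorem interior_region (k j : ℤ) : interior (Γ.region k j) = Γ.openRegion k j :=
  interior_setOf_mem_Icc_mem_Icc (Γ.continuous_v j) (Γ.continuous_v (j + 1))

theorem isCompact_region (k j : ℤ) : IsCompact (Γ.region k j) :=
  isCompact_setOf_mem_Icc_mem_Icc (Γ.continuous_v j) (Γ.continuous_v (j + 1)) (v_lt_v_succ · j)

theorem region_subset_closure_openRegion (k j : ℤ) :
    Γ.region k j ⊆ closure (Γ.openRegion k j) :=
  setOf_mem_Icc_mem_Icc_subset_closure (u_lt_u_succ k) (Γ.continuous_v j)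
    (Γ.continuous_v (j + 1)) (v_lt_v_succ · j)

theorem openRegion_subset_region (k j : ℤ) : Γ.openRegion k j ⊆ Γ.region k j :=
  fun _ hz => ⟨Ioo_subset_Icc_self hz.1, Ioo_subset_Icc_self hz.2⟩

theorem interior_cell (k j : ℤ) : interior (Γ.cell k j) = torusMk '' Γ.openRegion k j := by
  -- `torusMk` is injective on the open set `U` of points within `1/2` of the centre lines
  set m := (Γ.u k + Γ.u (k + 1)) / 2
  set μ : ℝ → ℝ := fun t => (Γ.v t j + Γ.v t (j + 1)) / 2
  have hμ : Continuous μ := ((Γ.continuous_v j).add (Γ.continuous_v (j + 1))).div_const 2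
  set U := {z : ℝ × ℝ | z.1 ∈ Ioo (m - 1 / 2) (m - 1 / 2 + 1) ∧
    z.2 ∈ Ioo (μ z.1 - 1 / 2) (μ z.1 - 1 / 2 + 1)}
  have hU : IsOpen U := (isOpen_Ioo.preimage continuous_fst).inter
    ((isOpen_lt ((hμ.sub continuous_const).comp continuous_fst) continuous_snd).inter
      (isOpen_lt continuous_snd (((hμ.sub continuous_const).add continuous_const).comp
        continuous_fst)))
  have hregion : Γ.region k j ⊆ U := by
    rintro ⟨t, s⟩ ⟨⟨ht₁, ht₂⟩, hs₁, hs₂⟩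
    have := u_succ_lt_add_one (Γ := Γ) k
    have := v_succ_lt_add_one (Γ := Γ) t j
    simp only [U, m, μ, mem_ofPred_eq, mem_Ioo] at *
    refine ⟨⟨?_, ?_⟩, ?_, ?_⟩ <;> linarith
  have hinj : InjOn torusMk U := by
    refine (injOn_torusMk (m - 1 / 2) (μ · - 1 / 2)).mono ?_
    exact fun _ hz => ⟨Ioo_subset_Ioc_self hz.1, Ioo_subset_Ioc_self hz.2⟩
  rw [cell, interior_image_eq_of_injOn continuous_torusMk isOpenMap_torusMk hU hinj hregion,
    interior_region]

theorem isClosed_cell (k j : ℤ) : IsClosed (Γ.cell k j) :=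
  ((Γ.isCompact_region k j).image continuous_torusMk).isClosed

theorem closure_interior_cell (k j : ℤ) : closure (interior (Γ.cell k j)) = Γ.cell k j := by
  rw [interior_cell]
  refine Subset.antisymm (closure_minimal (image_mono (openRegion_subset_region k j))
    (isClosed_cell k j)) ?_
  exact (image_mono (region_subset_closure_openRegion k j)).trans
    (image_closure_subset_closure_image continuous_torusMk)

theorem frontier_cell_subset (k j : ℤ) :
    frontier (Γ.cell k j) ⊆ torusMk '' (Γ.region k j \ Γ.openRegion k j) := by
  rw [frontier, (isClosed_cell k j).closure_eq, interior_cell]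
  rintro _ ⟨⟨z, hz, rfl⟩, hz'⟩
  exact ⟨z, ⟨hz, fun h => hz' ⟨z, h, rfl⟩⟩, rfl⟩


theorem u_D : Γ.u Γ.D = Γ.u 0 + 1 := by simpa using Γ.u_add_D 0

theorem v_E (x : ℝ) : Γ.v x Γ.E = Γ.v x 0 + 1 := by simpa using Γ.v_add_E x 0

theorem disjoint_openRegion {k j k' j' : ℤ} (h : (k, j) ≠ (k', j')) :
    Disjoint (Γ.openRegion k j) (Γ.openRegion k' j') := by
  rw [Set.disjoint_left]
  rintro z ⟨ht, hs⟩ ⟨ht', hs'⟩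
  by_cases hk : k = k'
  · subst hk
    exact Set.disjoint_left.1 ((Γ.strictMono_v z.1).monotone.disjoint_Ioo_succ
      fun hj => h (by rw [hj])) hs hs'
  · exact Set.disjoint_left.1 (Γ.strictMono_u.monotone.disjoint_Ioo_succ hk) ht ht'

theorem interior_cell_inter_interior_cell {k j k' j' : ℤ} (hk : k ∈ Ico 0 Γ.D)
    (hj : j ∈ Ico 0 Γ.E) (hk' : k' ∈ Ico 0 Γ.D) (hj' : j' ∈ Ico 0 Γ.E) (h : (k, j) ≠ (k', j')) :
    interior (Γ.cell k j) ∩ interior (Γ.cell k' j') = ∅ := by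
  have hsub {k j : ℤ} (hk : k ∈ Ico 0 Γ.D) (hj : j ∈ Ico 0 Γ.E) : Γ.openRegion k j ⊆
      {z | z.1 ∈ Ioc (Γ.u 0) (Γ.u 0 + 1) ∧ z.2 ∈ Ioc (Γ.v z.1 0) (Γ.v z.1 0 + 1)} :=
    fun z hz => ⟨Γ.strictMono_u.monotone.Ioo_subset_Ioc_of_mem_Ico u_D hk hz.1,
      (Γ.strictMono_v z.1).monotone.Ioo_subset_Ioc_of_mem_Ico (v_E z.1) hj hz.2⟩
  rw [interior_cell, interior_cell,
    ← (injOn_torusMk (Γ.u 0) (Γ.v · 0)).image_inter (hsub hk hj) (hsub hk' hj'),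
    (disjoint_openRegion h).inter_eq, image_empty]

theorem exists_mem_cell (p : T2) : ∃ k ∈ Ico 0 Γ.D, ∃ j ∈ Ico 0 Γ.E, p ∈ Γ.cell k j := by
  obtain ⟨k, hk, t, ht, hx⟩ := exists_coe_eq_mem_Ioc Γ.strictMono_u.monotone u_D p.1
  obtain ⟨j, hj, s, hs, hy⟩ := exists_coe_eq_mem_Ioc (Γ.strictMono_v t).monotone (v_E t) p.2
  exact ⟨k, hk, j, hj, (t, s), ⟨Ioc_subset_Icc_self ht, Ioc_subset_Icc_self hs⟩, Prod.ext hx hy⟩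

theorem interior_arc (k : ℤ) : interior (Γ.arc k) = (↑) '' Ioo (Γ.u k) (Γ.u (k + 1)) := by
  have hsub : Icc (Γ.u k) (Γ.u (k + 1)) ⊆
      Ioo ((Γ.u k + Γ.u (k + 1) - 1) / 2) ((Γ.u k + Γ.u (k + 1) - 1) / 2 + 1) := by
    have := u_succ_lt_add_one (Γ := Γ) k
    exact fun t ht => ⟨by linarith [ht.1], by linarith [ht.2]⟩
  rw [arc, interior_image_eq_of_injOn (g := ((↑) : ℝ → 𝕊)) (AddCircle.continuous_mk' 1)
    QuotientAddGroup.isOpenMap_coe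
    isOpen_Ioo ((injOn_coe_Ioc _).mono Ioo_subset_Ioc_self) hsub, interior_Icc]

theorem closure_interior_arc (k : ℤ) : closure (interior (Γ.arc k)) = Γ.arc k := by
  rw [interior_arc]
  refine Subset.antisymm (closure_minimal (image_mono Ioo_subset_Icc_self)
    (isCompact_Icc.image (AddCircle.continuous_mk' 1)).isClosed) ?_
  rw [arc, ← closure_Ioo (u_lt_u_succ k).ne]
  exact image_closure_subset_closure_image (AddCircle.continuous_mk' 1)

theorem interior_arc_inter_interior_arc {k k' : ℤ} (hk : k ∈ Ico 0 Γ.D) (hk' : k' ∈ Ico 0 Γ.D)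
    (h : k ≠ k') : interior (Γ.arc k) ∩ interior (Γ.arc k') = ∅ := by
  rw [interior_arc, interior_arc, ← (injOn_coe_Ioc _).image_inter
    (Γ.strictMono_u.monotone.Ioo_subset_Ioc_of_mem_Ico u_D hk)
    (Γ.strictMono_u.monotone.Ioo_subset_Ioc_of_mem_Ico u_D hk'),
    (Γ.strictMono_u.monotone.disjoint_Ioo_succ h).inter_eq, image_empty]

theorem fst_image_cell (k j : ℤ) : Prod.fst '' Γ.cell k j = Γ.arc k := by
  refine Subset.antisymm ?_ ?_
  · rintro _ ⟨_, ⟨z, hz, rfl⟩, rfl⟩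
    exact ⟨z.1, hz.1, rfl⟩
  · rintro _ ⟨t, ht, rfl⟩
    exact ⟨_, ⟨(t, Γ.v t j), ⟨ht, le_rfl, (v_lt_v_succ t j).le⟩, rfl⟩, rfl⟩

theorem fst_image_interior_cell (k j : ℤ) :
    Prod.fst '' interior (Γ.cell k j) = interior (Γ.arc k) := by
  rw [interior_cell, interior_arc]
  refine Subset.antisymm ?_ ?_
  · rintro _ ⟨_, ⟨z, hz, rfl⟩, rfl⟩
    exact ⟨z.1, hz.1, rfl⟩
  · rintro _ ⟨t, ht, rfl⟩
    have := v_lt_v_succ (Γ := Γ) t j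
    exact ⟨_, ⟨(t, (Γ.v t j + Γ.v t (j + 1)) / 2), ⟨ht, by linarith, by linarith⟩, rfl⟩, rfl⟩

theorem mem_cells {A : Set T2} :
    A ∈ Γ.cells ↔ ∃ k ∈ Ico 0 Γ.D, ∃ j ∈ Ico 0 Γ.E, Γ.cell k j = A := by
  simp [cells, and_assoc]

theorem mem_arcs {B : Set 𝕊} : B ∈ Γ.arcs ↔ ∃ k ∈ Ico 0 Γ.D, Γ.arc k = B := by
  simp [arcs]

theorem isProperPartition_cells : IsProperPartition Γ.cells := by
  refine ⟨?_, ?_, ?_⟩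
  · rintro _ hA
    obtain ⟨k, -, j, -, rfl⟩ := mem_cells.1 hA
    exact closure_interior_cell k j
  · refine eq_univ_of_forall fun p => ?_
    obtain ⟨k, hk, j, hj, hp⟩ := exists_mem_cell (Γ := Γ) p
    exact mem_biUnion (mem_cells.2 ⟨k, hk, j, hj, rfl⟩) hp
  · rintro _ hA _ hB hAB
    obtain ⟨k, hk, j, hj, rfl⟩ := mem_cells.1 hA
    obtain ⟨k', hk', j', hj', rfl⟩ := mem_cells.1 hB
    exact interior_cell_inter_interior_cell hk hj hk' hj' fun h => hAB (by simp_all)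

theorem isProperPartition_arcs : IsProperPartition Γ.arcs := by
  refine ⟨?_, ?_, ?_⟩
  · rintro _ hB
    obtain ⟨k, -, rfl⟩ := mem_arcs.1 hB
    exact closure_interior_arc k
  · refine eq_univ_of_forall fun x => ?_
    obtain ⟨k, hk, t, ht, rfl⟩ := exists_coe_eq_mem_Ioc Γ.strictMono_u.monotone u_D x
    exact mem_biUnion (mem_arcs.2 ⟨k, hk, rfl⟩) ⟨t, Ioc_subset_Icc_self ht, rfl⟩
  · rintro _ hB _ hB' hBB'
    obtain ⟨k, hk, rfl⟩ := mem_arcs.1 hB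
    obtain ⟨k', hk', rfl⟩ := mem_arcs.1 hB'
    exact interior_arc_inter_interior_arc hk hk' fun h => hBB' (by rw [h])

theorem projOf_cells : projOf Γ.cells = Γ.arcs := by
  ext B
  simp only [projOf, Finset.mem_image, mem_cells, mem_arcs]
  constructor
  · rintro ⟨_, ⟨k, hk, j, -, rfl⟩, rfl⟩
    exact ⟨k, hk, (fst_image_cell k j).symm⟩
  · rintro ⟨k, hk, rfl⟩
    exact ⟨_, ⟨k, hk, 0, ⟨le_rfl, by linarith [Γ.two_le_E]⟩, rfl⟩, fst_image_cell k 0⟩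

theorem fst_image_interior_disjoint_or_eq {A B : Set T2} (hA : A ∈ Γ.cells) (hB : B ∈ Γ.cells) :
    Prod.fst '' interior A ∩ Prod.fst '' interior B = ∅ ∨
      Prod.fst '' interior A = Prod.fst '' interior B := by
  obtain ⟨k, hk, j, -, rfl⟩ := mem_cells.1 hA
  obtain ⟨k', hk', j', -, rfl⟩ := mem_cells.1 hB
  rw [fst_image_interior_cell, fst_image_interior_cell]
  rcases eq_or_ne k k' with rfl | h
  · exact Or.inr rfl
  · exact Or.inl (interior_arc_inter_interior_arc hk hk' h)

/-- The lift `(F, G)` maps each region monotonically onto a unit square whose sides lie over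
`S0 x0 y0`. -/
structure IsAdapted (Γ : MarkovGrid) (S : SkewSystem) (x0 y0 : 𝕊) : Prop where
  strictMono_or_strictAnti_F : StrictMono S.F ∨ StrictAnti S.F
  strictMono_or_strictAnti_G :
    ∀ x, StrictMono (fun s => S.G (x, s)) ∨ StrictAnti fun s => S.G (x, s)
  abs_F_succ_sub : ∀ k, |S.F (Γ.u (k + 1)) - S.F (Γ.u k)| = 1
  coe_F : ∀ k, (S.F (Γ.u k) : 𝕊) = x0
  abs_G_succ_sub : ∀ x j, |S.G (x, Γ.v x (j + 1)) - S.G (x, Γ.v x j)| = 1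
  coe_G : ∀ x j, (S.G (x, Γ.v x j) : 𝕊) = y0

namespace IsAdapted

variable {Γ : MarkovGrid} {S : SkewSystem} {x0 y0 : 𝕊} (hΓ : Γ.IsAdapted S x0 y0)
include hΓ

theorem image_cell (k j : ℤ) : S.T '' Γ.cell k j = univ := by
  refine eq_univ_of_forall fun p => ?_
  obtain ⟨t, ht, hx⟩ := surjOn_coe_comp_Icc S.differentiable_F.continuous (u_lt_u_succ k).le
    (hΓ.abs_F_succ_sub k) (mem_univ p.1)
  obtain ⟨s, hs, hy⟩ := surjOn_coe_comp_Icc (S.differentiable_G_right t).continuous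
    (v_lt_v_succ t j).le (hΓ.abs_G_succ_sub t j) (mem_univ p.2)
  exact ⟨torusMk (t, s), ⟨(t, s), ⟨ht, hs⟩, rfl⟩, by rw [S.T_torusMk]; exact Prod.ext hx hy⟩

theorem injOn_interior_cell (k j : ℤ) : InjOn S.T (interior (Γ.cell k j)) := by
  rw [interior_cell]
  rintro _ ⟨⟨t, s⟩, ⟨ht, hs⟩, rfl⟩ _ ⟨⟨t', s'⟩, ⟨ht', hs'⟩, rfl⟩ h
  rw [S.T_torusMk, S.T_torusMk] at h
  simp only [torusMk, Prod.mk.injEq] at h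
  obtain rfl : t = t' :=
    injOn_coe_comp_Ioo hΓ.strictMono_or_strictAnti_F (hΓ.abs_F_succ_sub k) ht ht' h.1
  obtain rfl : s = s' :=
    injOn_coe_comp_Ioo (hΓ.strictMono_or_strictAnti_G t) (hΓ.abs_G_succ_sub t j) hs hs' h.2
  rfl

theorem image_frontier_cell_subset (k j : ℤ) : S.T '' frontier (Γ.cell k j) ⊆ S0 x0 y0 := by
  refine (image_mono (frontier_cell_subset k j)).trans ?_
  rintro _ ⟨_, ⟨⟨t, s⟩, ⟨⟨ht, hs⟩, hnot⟩, rfl⟩, rfl⟩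
  dsimp only at ht hs
  rw [S.T_torusMk]
  simp only [torusMk, S0, mem_union, mem_prod, mem_singleton_iff, mem_univ,
    and_true, true_and]
  rcases eq_endpoints_or_mem_Ioo_of_mem_Icc ht with rfl | rfl | ht
  · exact Or.inl (hΓ.coe_F k)
  · exact Or.inl (hΓ.coe_F (k + 1))
  rcases eq_endpoints_or_mem_Ioo_of_mem_Icc hs with rfl | rfl | hs
  · exact Or.inr (hΓ.coe_G t j)
  · exact Or.inr (hΓ.coe_G t (j + 1))
  · exact absurd ⟨ht, hs⟩ hnot

theorem image_arc (k : ℤ) : S.f '' Γ.arc k = univ := by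
  refine eq_univ_of_forall fun x => ?_
  obtain ⟨t, ht, hx⟩ := surjOn_coe_comp_Icc S.differentiable_F.continuous (u_lt_u_succ k).le
    (hΓ.abs_F_succ_sub k) (mem_univ x)
  exact ⟨t, ⟨t, ht, rfl⟩, (S.liftf t).trans hx⟩

theorem isMarkovPartition_arcs : IsMarkovPartition S.f Γ.arcs := by
  refine ⟨isProperPartition_arcs, fun B hB B' _ _ => ?_⟩
  obtain ⟨k, -, rfl⟩ := mem_arcs.1 hB
  rw [hΓ.image_arc]
  exact subset_univ _

end IsAdapted

end MarkovGrid

theorem SkewSystem.exists_isAdapted (S : SkewSystem) (x0 y0 : 𝕊) :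
    ∃ Γ : MarkovGrid, Γ.IsAdapted S x0 y0 := by
  obtain ⟨d, hd⟩ := S.exists_F_add_one
  obtain ⟨e, he⟩ := S.exists_G_add_one
  have hFmono := strictMono_or_strictAnti_of_deriv_ne_zero S.differentiable_F
    fun t => abs_pos.1 (one_pos.trans (S.one_lt_abs_deriv_F t))
  have hGmono (x : ℝ) := strictMono_or_strictAnti_of_deriv_ne_zero (S.differentiable_G_right x)
    fun s => abs_pos.1 (one_pos.trans (S.one_lt_abs_deriv_G x s))
  obtain ⟨ξ₀, rfl⟩ := QuotientAddGroup.mk_surjective x0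
  obtain ⟨η₀, rfl⟩ := QuotientAddGroup.mk_surjective y0
  have hd₂ := two_le_abs_of_one_lt_abs_deriv S.differentiable_F S.one_lt_abs_deriv_F hd
  have he₂ := two_le_abs_of_one_lt_abs_deriv (S.differentiable_G_right 0)
    (S.one_lt_abs_deriv_G 0) (he 0)
  obtain ⟨u, -, hu, huD, huF, hcoeF⟩ := exists_continuous_levels (X := Unit) (h := fun _ => S.F)
    (S.differentiable_F.continuous.comp continuous_snd) (fun _ => hFmono) hd₂ (fun _ => hd) ξ₀
  obtain ⟨v, hvc, hv, hvE, hvG, hcoeG⟩ := exists_continuous_levels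
    (h := fun x s => S.G (x, s)) S.differentiable_G.continuous hGmono he₂ he η₀
  exact ⟨⟨|d|, |e|, u (), v, hd₂, he₂, hu (), huD (), hvc, hv, hvE⟩,
    ⟨hFmono, hGmono, huF (), hcoeF (), hvG, hcoeG⟩⟩

/-- **Fibered Markov partition** (Lemma 2.1). For any `(x₀,y₀) ∈ 𝕋²`, there is a finite
partition `ℛ` of `𝕋²` into Markov proper sets such that: (1) each element maps onto `𝕋²`
and `T` is one-to-one on its interior; (2) the projections of the interiors of two elements
are either disjoint or equal; (3) the boundary is mapped into `S₀`; (4) `𝒫 = π(ℛ)` is a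
Markov partition for `f`. -/
theorem exists_fibered_markov_partition (S : SkewSystem) :
    ∀ x0 y0 : 𝕊, ∃ R : Finset (Set T2),
      IsProperPartition R ∧
      (∀ A ∈ R, S.T '' A = Set.univ ∧ Set.InjOn S.T (interior A)) ∧
      (∀ A ∈ R, ∀ B ∈ R,
        (Prod.fst '' interior A) ∩ (Prod.fst '' interior B) = ∅ ∨
          Prod.fst '' interior A = Prod.fst '' interior B) ∧
      (∀ A ∈ R, S.T '' frontier A ⊆ S0 x0 y0) ∧
      IsMarkovPartition S.f (projOf R) := by
  intro x0 y0
  obtain ⟨Γ, hΓ⟩ := S.exists_isAdapted x0 y0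
  refine ⟨Γ.cells, Γ.isProperPartition_cells, fun A hA => ?_,
    fun A hA B hB => MarkovGrid.fst_image_interior_disjoint_or_eq hA hB, fun A hA => ?_,
    Γ.projOf_cells ▸ hΓ.isMarkovPartition_arcs⟩
  · obtain ⟨k, -, j, -, rfl⟩ := MarkovGrid.mem_cells.1 hA
    exact ⟨hΓ.image_cell k j, hΓ.injOn_interior_cell k j⟩
  · obtain ⟨k, -, j, -, rfl⟩ := MarkovGrid.mem_cells.1 hA
    exact hΓ.image_frontier_cell_subset k j

end
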